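/- arXiv:2008.13591 — 7 statements merged into one kernel-verified Lean document; each statement's English description precedes it below -/
import Mathlib

section
/- Let n be even, n ≥ 8, and 4 ≤ ℓ ≤ n/2. Identify vertices with residues mod n and let C_n be the Hamilton cycle (v_0, v_1, ..., v_{n-1}, v_0). Let e = (v_i, v_j) be a chord with (j - i) mod n ≥ ℓ/2 and (j - i) mod n ≤ n/2, and let f = {v_{(i+k) mod n}, v_{(j+ℓ-k-2) mod n}} for some integer 1 ≤ k ≤ ℓ/2 - 1. Then the graph C_n ∪ {e, f} contains a cycle of length ℓ and a cycle of length n - ℓ + 4. -/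
/-- `G` contains a cycle of length `m`. -/
def HasCycleLength {V : Type*} (G : SimpleGraph V) (m : ℕ) : Prop :=
  ∃ (v : V) (w : G.Walk v v), w.IsCycle ∧ w.length = m

/-! Both cycles consist of two arcs of `C_n` joined at their ends by the chords `e = {i, j}` and
`f = {i + k, j + ℓ - k - 2}`. The arcs `[i, i + k]` and `[j, j + ℓ - k - 2]` give a cycle of length
`k + (ℓ - k - 2) + 2 = ℓ`; the complementary arcs `[i + k, j]` and `[j + ℓ - k - 2, i]` give one of
length `n - ℓ + 4`. The bounds on `(j - i) mod n`, `k` and `ℓ` keep the two arcs of each pair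
disjoint. -/

open SimpleGraph

theorem hasCycleLength_of_injOn {V : Type*} {G : SimpleGraph V} {m : ℕ} (hm : 2 < m)
    (f : ℕ → V) (hinj : Set.InjOn f (Set.Iio m)) (hadj : ∀ t < m, G.Adj (f t) (f (t + 1)))
    (hclosed : f m = f 0) : HasCycleLength G m := by
  have hsucc : ∀ u v : Fin m, (u - v).val = 1 → G.Adj (f v) (f u) := by
    intro u v huv
    rcases le_or_gt v u with hvu | huv'
    · rw [Fin.sub_val_of_le hvu] at huv
      simpa [show (u : ℕ) = v + 1 by omega] using hadj v v.isLt
    · rw [Fin.coe_sub_iff_lt.2 huv'] at huv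
      have hu : (u : ℕ) = 0 := by omega
      have hv : (v : ℕ) + 1 = m := by omega
      simpa [hu, hv, hclosed] using hadj v v.isLt
  refine (cycleGraph_isContained_iff hm).1
    ⟨Hom.toCopy ⟨fun u => f u, fun {u v} h => ?_⟩
      fun u v h => Fin.ext (hinj u.isLt v.isLt h)⟩
  rcases cycleGraph_adj'.1 h with h | h
  · exact (hsucc u v h).symm
  · exact hsucc v u h

theorem ZMod.natCast_injOn_Iio (n : ℕ) : Set.InjOn (Nat.cast : ℕ → ZMod n) (Set.Iio n) :=
  fun a ha b hb h => by rw [← ZMod.val_cast_of_lt ha, ← ZMod.val_cast_of_lt hb, h]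

theorem ZMod.self_ne_add_natCast {n a : ℕ} (ha₀ : 0 < a) (ha : a < n) (x : ZMod n) :
    x ≠ x + a := by
  rw [ne_eq, left_eq_add, ZMod.natCast_eq_zero_iff]
  exact fun h => ha₀.ne' (Nat.eq_zero_of_dvd_of_lt h ha)

/-- The cycle runs forward along `a, …, a + p`, takes `h₂` to `a + s + q`, runs backward to
`a + s` and closes with `h₁`. -/
theorem hasCycleLength_of_two_arcs {n : ℕ} {G : SimpleGraph (ZMod n)}
    (hG : ∀ x, G.Adj x (x + 1)) (a : ZMod n) {p q s : ℕ} (hpq : 0 < p + q) (hps : p < s)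
    (hsq : s + q < n) (h₁ : G.Adj a (a + s)) (h₂ : G.Adj (a + p) (a + s + q)) :
    HasCycleLength G (p + q + 2) := by
  set offset : ℕ → ℕ := fun t =>
    if t ≤ p then t else if t < p + q + 2 then s + q + p + 1 - t else 0
  have offset_lt : ∀ t, offset t < n := fun t => by simp only [offset]; split_ifs <;> omega
  have offset_first : ∀ t ≤ p, offset t = t := fun t ht => if_pos ht
  have offset_second : ∀ t, p < t → t < p + q + 2 → offset t = s + q + p + 1 - t :=
    fun t h₁ h₂ => by simp only [offset]; rw [if_neg (by omega), if_pos h₂]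
  have offset_end : offset (p + q + 2) = 0 := by
    simp only [offset]; rw [if_neg (by omega), if_neg (by omega)]
  refine hasCycleLength_of_injOn (by omega) (fun t => a + offset t) ?_ ?_
    (by simp [offset_end, offset_first 0 p.zero_le])
  · intro t ht u hu h
    have := ZMod.natCast_injOn_Iio n (offset_lt t) (offset_lt u) (add_left_cancel h)
    simp only [offset] at this
    simp only [Set.mem_Iio] at ht hu
    split_ifs at this <;> omega
  · intro t ht
    rcases lt_trichotomy t p with htp | rfl | htp
    · rw [offset_first t htp.le, offset_first (t + 1) htp, Nat.cast_succ, ← add_assoc]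
      exact hG _
    · rw [offset_first t le_rfl, offset_second (t + 1) (by omega) (by omega),
        show s + q + t + 1 - (t + 1) = s + q by omega, Nat.cast_add, ← add_assoc]
      exact h₂
    · rcases (show t + 1 < p + q + 2 ∨ t + 1 = p + q + 2 by omega) with ht' | ht'
      · rw [offset_second t htp (by omega), offset_second (t + 1) (by omega) ht',
          show s + q + p + 1 - t = (s + q + p + 1 - (t + 1)) + 1 by omega, Nat.cast_succ,
          ← add_assoc]
        exact (hG _).symm
      · rw [ht', offset_end, offset_second t htp (by omega), show s + q + p + 1 - t = s by omega,
          Nat.cast_zero, add_zero]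
        exact h₁.symm

theorem stmt0_general (n ℓ : ℕ) (hln : 2 * ℓ ≤ n)
    (i j : ZMod n) (k : ℕ)
    (hij1 : ℓ ≤ 2 * (j - i).val) (hij2 : 2 * (j - i).val ≤ n)
    (hk1 : 1 ≤ k) (hk2 : 2 * k ≤ ℓ - 2)
    (G : SimpleGraph (ZMod n))
    (hG : G = SimpleGraph.fromRel (fun a b =>
      b = a + 1 ∨ (a = i ∧ b = j) ∨ (a = i + (k : ZMod n) ∧ b = j + (ℓ : ZMod n) - (k : ZMod n) - 2))) :
    HasCycleLength G ℓ ∧ HasCycleLength G (n - ℓ + 4) := by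
  -- `k`, `p`, `q`, `r` are the lengths of the arcs `[i, i + k]`, `[i + k, j]`, `[j, j + ℓ - k - 2]`
  -- and `[j + ℓ - k - 2, i]`.
  obtain ⟨p, hp⟩ : ∃ p, (j - i).val = p + k := ⟨(j - i).val - k, by omega⟩
  obtain ⟨q, rfl⟩ : ∃ q, ℓ = k + q + 2 := ⟨ℓ - k - 2, by omega⟩
  obtain ⟨r, hr⟩ : ∃ r, n = p + q + r + k := ⟨n - p - q - k, by omega⟩
  have hj : j = i + (p + k : ℕ) := by
    have : NeZero n := ⟨by omega⟩
    rw [← hp, ZMod.natCast_zmod_val, add_sub_cancel]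
  have hi : i + k + (p + q : ℕ) + r = i := by
    have hn0 : ((p + q + r + k : ℕ) : ZMod n) = 0 := by rw [← hr, ZMod.natCast_self]
    push_cast at hn0 ⊢
    linear_combination hn0
  have hstep : ∀ x, G.Adj x (x + 1) := fun x => by
    rw [hG, fromRel_adj]
    exact ⟨by simpa using ZMod.self_ne_add_natCast one_pos (by omega) x, .inl (.inl rfl)⟩
  have he : G.Adj i (i + (p + k : ℕ)) := by
    rw [hG, fromRel_adj]
    exact ⟨ZMod.self_ne_add_natCast (by omega) (by omega) i,
      .inl (.inr (.inl ⟨rfl, hj.symm⟩))⟩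
  have hf : G.Adj (i + k) (i + k + (p + q : ℕ)) := by
    rw [hG, fromRel_adj]
    refine ⟨ZMod.self_ne_add_natCast (by omega) (by omega) _, .inl (.inr (.inr ⟨rfl, ?_⟩))⟩
    rw [hj]
    push_cast
    ring
  constructor
  · refine hasCycleLength_of_two_arcs hstep i (p := k) (q := q) (s := p + k)
      (by omega) (by omega) (by omega) he ?_
    convert hf using 1
    push_cast
    ring
  · rw [show n - (k + q + 2) + 4 = p + r + 2 by omega]
    refine hasCycleLength_of_two_arcs hstep (i + k) (p := p) (q := r) (s := p + q)
      (by omega) (by omega) (by omega) hf ?_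
    rw [hi]
    convert he.symm using 1
    push_cast
    ring

theorem stmt0 (n ℓ : ℕ) (hn : 8 ≤ n) (hne : Even n) (hl : 4 ≤ ℓ) (hln : 2 * ℓ ≤ n)
    (i j : ZMod n) (k : ℕ)
    (hij1 : ℓ ≤ 2 * (j - i).val) (hij2 : 2 * (j - i).val ≤ n)
    (hk1 : 1 ≤ k) (hk2 : 2 * k ≤ ℓ - 2)
    (G : SimpleGraph (ZMod n))
    (hG : G = SimpleGraph.fromRel (fun a b =>
      b = a + 1 ∨ (a = i ∧ b = j) ∨ (a = i + (k : ZMod n) ∧ b = j + (ℓ : ZMod n) - (k : ZMod n) - 2))) :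
    HasCycleLength G ℓ ∧ HasCycleLength G (n - ℓ + 4) :=
  stmt0_general n ℓ hln i j k hij1 hij2 hk1 hk2 G hG
end

section
/- Let M' be a matching on V = {v_0, ..., v_{n-1}} and let X_{M'} be the auxiliary graph on V with edge set ⋃{ F_{e,ℓ} : e ∈ M' ∩ E_ℓ }. Then the maximum degree of X_{M'} is at most ℓ - 3. -/
/-!
A pair of `F_{e,ℓ}` through `v` has the form `{v_{i+k}, v_{j+ℓ-k-2}}`; if `v` is its first
point then `v - k` is the endpoint `v_i` of `e`, and if `v` is its second point then
`v - (ℓ - 2 - k)` is the endpoint `v_j`. Either way `e` has an endpoint among the `ℓ - 3`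
vertices `v - 1, …, v - (ℓ - 3)`. Since `ℓ/2 ≤ j - i ≤ n/2` and `2ℓ ≤ n`, the first point of
one pair of `F_{e,ℓ}` is never the second point of another, so `v` lies on at most one of them.
As the chords of the matching have disjoint endpoints, at most `ℓ - 3` of them contribute a
pair through `v`.
-/

/-- The set of ordered chords `(v_i, v_j)` with `ℓ/2 ≤ (j - i) mod n ≤ n/2`. -/
def chordSet (n ℓ : ℕ) [NeZero n] : Finset (ZMod n × ZMod n) :=
  Finset.univ.filter (fun p => ℓ ≤ 2 * (p.2 - p.1).val ∧ 2 * (p.2 - p.1).val ≤ n)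

/-- The switching set `F_{e,ℓ}` of unordered pairs associated to a chord `e`. -/
def switchSet (n ℓ : ℕ) [NeZero n] (e : ZMod n × ZMod n) : Finset (Sym2 (ZMod n)) :=
  (Finset.Icc 1 (ℓ / 2 - 1)).image
    (fun k : ℕ => s(e.1 + (k : ZMod n), e.2 + (ℓ : ZMod n) - (k : ZMod n) - 2))

open Finset

def window (n ℓ : ℕ) (v : ZMod n) : Finset (ZMod n) :=
  (Icc 1 (ℓ - 3)).image fun k : ℕ => v - k

lemma card_window_le (n ℓ : ℕ) (v : ZMod n) : #(window n ℓ v) ≤ ℓ - 3 :=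
  card_image_le.trans (by rw [Nat.card_Icc, Nat.add_sub_cancel])

/-- In a matching, every vertex of `W` is an endpoint of at most one edge. -/
lemma sum_card_endpoints_inter_le {α : Type*} [DecidableEq α] (A : Finset (α × α))
    (hA : ∀ e ∈ A, ∀ f ∈ A, e ≠ f → ({e.1, e.2} : Set α) ∩ {f.1, f.2} = ∅) (W : Finset α) :
    ∑ e ∈ A, #({e.1, e.2} ∩ W) ≤ #W := by
  have hdisj : (A : Set (α × α)).PairwiseDisjoint fun e => {e.1, e.2} ∩ W := by
    intro e he f hf hef
    refine disjoint_left.2 fun x hxe hxf => ?_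
    have hx : x ∈ ({e.1, e.2} : Set α) ∩ {f.1, f.2} := by
      simp only [mem_inter, mem_insert, mem_singleton] at hxe hxf
      exact ⟨hxe.1, hxf.1⟩
    rw [hA e he f hf hef] at hx
    exact hx
  rw [← card_biUnion hdisj]
  exact card_le_card (biUnion_subset.2 fun _ _ => inter_subset_right)

section switchSet

variable {n ℓ : ℕ} [NeZero n]

lemma left_ne_right_of_mem_chordSet (hln : 2 * ℓ ≤ n) {e : ZMod n × ZMod n}
    (he : e ∈ chordSet n ℓ) {k₁ k₂ : ℕ} (hk₁ : k₁ ∈ Icc 1 (ℓ / 2 - 1))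
    (hk₂ : k₂ ∈ Icc 1 (ℓ / 2 - 1)) : e.1 + k₁ ≠ e.2 + ℓ - k₂ - 2 := by
  intro heq
  simp only [chordSet, mem_filter, mem_univ, true_and] at he
  simp only [mem_Icc] at hk₁ hk₂
  obtain ⟨d, rfl⟩ : ∃ d, ℓ = k₁ + k₂ + 2 + d := ⟨ℓ - (k₁ + k₂ + 2), by omega⟩
  have hdiff : e.2 - e.1 = -(d : ZMod n) := by
    push_cast at heq
    linear_combination -heq
  rw [hdiff, ZMod.neg_val, ZMod.val_cast_of_lt (by omega)] at he
  split_ifs at he <;> omega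

lemma eq_of_mem_switchSet_pair (hln : 2 * ℓ ≤ n) {e : ZMod n × ZMod n}
    (he : e ∈ chordSet n ℓ) {v : ZMod n} {k k' : ℕ} (hk : k ∈ Icc 1 (ℓ / 2 - 1))
    (hk' : k' ∈ Icc 1 (ℓ / 2 - 1)) (hv : v ∈ s(e.1 + k, e.2 + ℓ - k - 2))
    (hv' : v ∈ s(e.1 + k', e.2 + ℓ - k' - 2)) : k = k' := by
  have hcast : (k : ZMod n) = k' → k = k' := fun h => by
    simpa only [ZMod.val_cast_of_lt (show k < n by simp only [mem_Icc] at hk; omega),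
      ZMod.val_cast_of_lt (show k' < n by simp only [mem_Icc] at hk'; omega)]
      using congrArg ZMod.val h
  rw [Sym2.mem_iff] at hv hv'
  rcases hv with rfl | rfl <;> rcases hv' with h | h
  · exact hcast (by linear_combination h)
  · exact (left_ne_right_of_mem_chordSet hln he hk hk' h).elim
  · exact (left_ne_right_of_mem_chordSet hln he hk' hk h.symm).elim
  · exact hcast (by linear_combination -h)

lemma card_filter_mem_switchSet_le_one (hln : 2 * ℓ ≤ n) {e : ZMod n × ZMod n}
    (he : e ∈ chordSet n ℓ) (v : ZMod n) : #((switchSet n ℓ e).filter (v ∈ ·)) ≤ 1 := by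
  refine card_le_one.2 fun p hp q hq => ?_
  simp only [switchSet, mem_filter, mem_image] at hp hq
  obtain ⟨⟨k, hk, rfl⟩, hvp⟩ := hp
  obtain ⟨⟨k', hk', rfl⟩, hvq⟩ := hq
  rw [eq_of_mem_switchSet_pair hln he hk hk' hvp hvq]

lemma endpoint_mem_window {e : ZMod n × ZMod n} {v : ZMod n} {p : Sym2 (ZMod n)}
    (hp : p ∈ switchSet n ℓ e) (hvp : v ∈ p) : ({e.1, e.2} ∩ window n ℓ v).Nonempty := by
  simp only [switchSet, mem_image, mem_Icc] at hp
  obtain ⟨k, hk, rfl⟩ := hp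
  rcases Sym2.mem_iff.1 hvp with rfl | rfl
  · exact ⟨e.1, mem_inter.2 ⟨by simp, mem_image.2 ⟨k, mem_Icc.2 ⟨hk.1, by omega⟩, by ring⟩⟩⟩
  · refine ⟨e.2, mem_inter.2 ⟨by simp, mem_image.2 ⟨ℓ - 2 - k, mem_Icc.2 ⟨by omega, by omega⟩, ?_⟩⟩⟩
    rw [Nat.cast_sub (by omega), Nat.cast_sub (by omega)]
    push_cast
    ring

lemma card_filter_mem_switchSet_le (hln : 2 * ℓ ≤ n) {e : ZMod n × ZMod n}
    (he : e ∈ chordSet n ℓ) (v : ZMod n) :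
    #((switchSet n ℓ e).filter (v ∈ ·)) ≤ #({e.1, e.2} ∩ window n ℓ v) := by
  rcases ((switchSet n ℓ e).filter (v ∈ ·)).eq_empty_or_nonempty with h | ⟨p, hp⟩
  · simp [h]
  · rw [mem_filter] at hp
    exact (card_filter_mem_switchSet_le_one hln he v).trans
      (card_pos.2 (endpoint_mem_window hp.1 hp.2))

end switchSet

theorem stmt3_general (n ℓ : ℕ) [NeZero n] (hln : 2 * ℓ ≤ n)
    (M' : Finset (ZMod n × ZMod n))
    (hM'disj : ∀ e ∈ M', ∀ f ∈ M', e ≠ f →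
      ({e.1, e.2} : Set (ZMod n)) ∩ {f.1, f.2} = ∅) :
    ∀ v : ZMod n,
      (((M'.filter (· ∈ chordSet n ℓ)).biUnion (switchSet n ℓ)).filter
          (fun s => v ∈ s)).card ≤ ℓ - 3 := by
  intro v
  set A := M'.filter (· ∈ chordSet n ℓ)
  have hA : ∀ e ∈ A, ∀ f ∈ A, e ≠ f → ({e.1, e.2} : Set (ZMod n)) ∩ {f.1, f.2} = ∅ :=
    fun e he f hf => hM'disj e (mem_filter.1 he).1 f (mem_filter.1 hf).1
  calc #((A.biUnion (switchSet n ℓ)).filter (v ∈ ·))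
      = #(A.biUnion fun e => (switchSet n ℓ e).filter (v ∈ ·)) := by rw [filter_biUnion]
    _ ≤ ∑ e ∈ A, #((switchSet n ℓ e).filter (v ∈ ·)) := card_biUnion_le
    _ ≤ ∑ e ∈ A, #({e.1, e.2} ∩ window n ℓ v) :=
      sum_le_sum fun e he => card_filter_mem_switchSet_le hln (mem_filter.1 he).2 v
    _ ≤ #(window n ℓ v) := sum_card_endpoints_inter_le A hA _
    _ ≤ ℓ - 3 := card_window_le n ℓ v

theorem stmt3 (n ℓ : ℕ) [NeZero n] (hn : 8 ≤ n) (hl : 4 ≤ ℓ) (hln : 2 * ℓ ≤ n)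
    (M' : Finset (ZMod n × ZMod n))
    (hM'ne : ∀ e ∈ M', e.1 ≠ e.2)
    (hM'disj : ∀ e ∈ M', ∀ f ∈ M', e ≠ f →
      ({e.1, e.2} : Set (ZMod n)) ∩ {f.1, f.2} = ∅) :
    ∀ v : ZMod n,
      (((M'.filter (· ∈ chordSet n ℓ)).biUnion (switchSet n ℓ)).filter
          (fun s => v ∈ s)).card ≤ ℓ - 3 :=
  stmt3_general n ℓ hln M' hM'disj
end

section
/- Directed shortcut lemma: let 4 ≤ ℓ ≤ n - 4 and let ⃗C_n be the directed cycle with edges (v_i, v_{(i+1) mod n}). Let ⃗e = (v_i, v_j) be a directed chord with (j - i) mod n ∈ [2, n - ℓ], and let ⃗f = (v_{(j+ℓ-k-2) mod n}, v_{(i-k) mod n}) for some integer 0 ≤ k ≤ ℓ - 2. Then the directed graph ⃗C_n ∪ {⃗e, ⃗f} contains a directed cycle of length ℓ. -/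
/-!
The cycle is `v_i → v_j → v_{j+1} → ⋯ → v_{j+ℓ-k-2} → v_{i-k} → v_{i-k+1} → ⋯ → v_{i-1} → v_i`,
using `⃗e` and `⃗f` once each and arcs of `⃗C_n` otherwise. Measured from `v_i` along `⃗C_n`, the
offsets of its vertices are `0 < d < ⋯ < d + ℓ - k - 2 < n - k < ⋯ < n - 1` with `d = (j - i) mod n`;
the middle gap is positive because `d ≤ n - ℓ`, so these `ℓ` offsets are distinct residues mod `n`.
-/

/-- A directed graph (given as a relation `r`) contains a directed cycle of length `ℓ`:
a closed directed walk through `ℓ` distinct vertices. -/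
def HasDirCycleLength {V : Type*} (r : V → V → Prop) (ℓ : ℕ) : Prop :=
  ∃ g : ZMod ℓ → V, Function.Injective g ∧ ∀ t : ZMod ℓ, r (g t) (g (t + 1))

theorem hasDirCycleLength_of_closed_walk {V : Type*} {r : V → V → Prop} {ℓ : ℕ} [NeZero ℓ]
    (g : ℕ → V) (hg : Set.InjOn g (Set.Iio ℓ)) (hclosed : g ℓ = g 0)
    (hstep : ∀ t < ℓ, r (g t) (g (t + 1))) : HasDirCycleLength r ℓ := by
  refine ⟨fun t => g t.val, fun a b hab => ZMod.val_injective ℓ <|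
    hg (ZMod.val_lt a) (ZMod.val_lt b) hab, fun t => ?_⟩
  have hnext : g (t + 1).val = g (t.val + 1) := by
    have hval : (t + 1).val = (t.val + 1) % ℓ := by
      rw [← ZMod.val_natCast, Nat.cast_add, ZMod.natCast_zmod_val, Nat.cast_one]
    obtain hlt | heq : t.val + 1 < ℓ ∨ t.val + 1 = ℓ := Nat.lt_or_eq_of_le (ZMod.val_lt t)
    · rw [hval, Nat.mod_eq_of_lt hlt]
    · rw [hval, heq, Nat.mod_self, hclosed]
  simpa only [hnext] using hstep t.val (ZMod.val_lt t)

theorem ZMod.injOn_add_intCast {α : Type*} {n : ℕ} (a : ZMod n) {o : α → ℤ} {s : Set α}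
    (ho : Set.InjOn o s) (hrange : ∀ x ∈ s, o x ∈ Set.Ico 0 (n : ℤ)) :
    Set.InjOn (fun x => a + (o x : ZMod n)) s := by
  intro x hx y hy hxy
  have hmod := (ZMod.intCast_eq_intCast_iff' (o x) (o y) n).mp (add_left_cancel hxy)
  rw [Int.emod_eq_of_lt (hrange x hx).1 (hrange x hx).2,
    Int.emod_eq_of_lt (hrange y hy).1 (hrange y hy).2] at hmod
  exact ho hx hy hmod

section Shortcut

variable (n ℓ k d : ℕ)

/-- The offset from `v_i` of the `t`-th vertex of the shortcut cycle, where `d = (j - i) mod n`;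
the value `n` at `t = ℓ` closes the walk. -/
def shortcutOffset (t : ℕ) : ℤ :=
  if t = 0 then 0 else if t + k < ℓ then d + t - 1 else n + t - ℓ

variable {n ℓ k d} {t : ℕ}

theorem shortcutOffset_strictMono (hd : 0 < d) (hdℓ : d + ℓ ≤ n) :
    StrictMono (shortcutOffset n ℓ k d) :=
  strictMono_nat_of_lt_succ fun t => by unfold shortcutOffset; grind

@[simp]
theorem shortcutOffset_zero : shortcutOffset n ℓ k d 0 = 0 := rfl

theorem shortcutOffset_self (hℓ : ℓ ≠ 0) : shortcutOffset n ℓ k d ℓ = n := by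
  unfold shortcutOffset; grind

theorem shortcutOffset_mem_Ico (hd : 0 < d) (hdℓ : d + ℓ ≤ n) (ht : t < ℓ) :
    shortcutOffset n ℓ k d t ∈ Set.Ico 0 (n : ℤ) := by
  have ho := shortcutOffset_strictMono (k := k) hd hdℓ
  constructor
  · simpa using ho.monotone t.zero_le
  · simpa [shortcutOffset_self (n := n) (k := k) (d := d) (by omega : ℓ ≠ 0)] using ho ht

theorem shortcutOffset_one (hk : k + 2 ≤ ℓ) : shortcutOffset n ℓ k d 1 = d := by
  unfold shortcutOffset; grind

theorem shortcutOffset_of_add_eq (ht : t ≠ 0) (htk : t + k + 1 = ℓ) :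
    shortcutOffset n ℓ k d t = d + t - 1 ∧ shortcutOffset n ℓ k d (t + 1) = n - k := by
  unfold shortcutOffset; grind

theorem shortcutOffset_succ (ht : t ≠ 0) (htk : t + k + 1 ≠ ℓ) :
    shortcutOffset n ℓ k d (t + 1) = shortcutOffset n ℓ k d t + 1 := by
  unfold shortcutOffset; grind

theorem shortcutOffset_succ_cases (hk : k + 2 ≤ ℓ) (t : ℕ) :
    (shortcutOffset n ℓ k d (t + 1) : ZMod n) = shortcutOffset n ℓ k d t + 1 ∨
    ((shortcutOffset n ℓ k d t : ZMod n) = 0 ∧ (shortcutOffset n ℓ k d (t + 1) : ZMod n) = d) ∨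
    ((shortcutOffset n ℓ k d t : ZMod n) = d + ℓ - k - 2 ∧
      (shortcutOffset n ℓ k d (t + 1) : ZMod n) = -k) := by
  rcases eq_or_ne t 0 with rfl | ht0
  · exact Or.inr (Or.inl ⟨by simp, by simp [shortcutOffset_one hk]⟩)
  by_cases htk : t + k + 1 = ℓ
  · obtain ⟨hot, hot'⟩ := shortcutOffset_of_add_eq (n := n) (d := d) ht0 htk
    refine Or.inr (Or.inr ⟨?_, ?_⟩)
    · rw [hot, ← htk]
      push_cast
      ring
    · rw [hot']
      push_cast
      rw [ZMod.natCast_self, zero_sub]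
  · rw [shortcutOffset_succ ht0 htk]
    exact Or.inl (by push_cast; rfl)

end Shortcut

theorem stmt4_general (n ℓ : ℕ) [NeZero n] (hl : 4 ≤ ℓ)
    (i j : ZMod n) (k : ℕ)
    (hij1 : 2 ≤ (j - i).val) (hij2 : (j - i).val ≤ n - ℓ)
    (hk : k ≤ ℓ - 2)
    (r : ZMod n → ZMod n → Prop)
    (hr : r = fun a b => b = a + 1 ∨ (a = i ∧ b = j) ∨
      (a = j + (ℓ : ZMod n) - (k : ZMod n) - 2 ∧ b = i - (k : ZMod n))) :
    HasDirCycleLength r ℓ := by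
  subst hr
  have : NeZero ℓ := ⟨by omega⟩
  set d := (j - i).val
  have hj : j = i + d := by rw [ZMod.natCast_zmod_val]; ring
  refine hasDirCycleLength_of_closed_walk (fun t => i + (shortcutOffset n ℓ k d t : ZMod n))
    (ZMod.injOn_add_intCast i (shortcutOffset_strictMono (by omega) (by omega)).injective.injOn
      fun t ht => shortcutOffset_mem_Ico (by omega) (by omega) ht)
    (by simp [shortcutOffset_self (NeZero.ne ℓ)]) fun t _ => ?_
  rcases shortcutOffset_succ_cases (n := n) (d := d) (by omega : k + 2 ≤ ℓ) t with
    hC | ⟨he, he'⟩ | ⟨hf, hf'⟩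
  · exact Or.inl (by rw [hC]; ring)
  · exact Or.inr (Or.inl ⟨by rw [he, add_zero], by rw [he', hj]⟩)
  · exact Or.inr (Or.inr ⟨by rw [hf, hj]; ring, by rw [hf']; ring⟩)

theorem stmt4 (n ℓ : ℕ) [NeZero n] (hn : 8 ≤ n) (hl : 4 ≤ ℓ) (hln : ℓ ≤ n - 4)
    (i j : ZMod n) (k : ℕ)
    (hij1 : 2 ≤ (j - i).val) (hij2 : (j - i).val ≤ n - ℓ)
    (hk : k ≤ ℓ - 2)
    (r : ZMod n → ZMod n → Prop)
    (hr : r = fun a b => b = a + 1 ∨ (a = i ∧ b = j) ∨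
      (a = j + (ℓ : ZMod n) - (k : ZMod n) - 2 ∧ b = i - (k : ZMod n))) :
    HasDirCycleLength r ℓ :=
  stmt4_general n ℓ hl i j k hij1 hij2 hk r hr
end

section
/- In the directed setting: if ⃗e = (v_i, v_j) ∈ E_ℓ, then every element of F_{⃗e,ℓ} also belongs to E_ℓ. More precisely, for ⃗f = (v_{(j+ℓ-k-2) mod n}, v_{(i-k) mod n}) with 0 ≤ k ≤ ℓ - 2, the difference of endpoint indices of ⃗f modulo n equals n - ℓ + 2 - ((j - i) mod n), which lies in {2, ..., n - ℓ}. -/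
/-! The edge `(v_{j+ℓ-k-2}, v_{i-k})` has index difference `-(ℓ - 2 + (j - i))` in `ZMod n`: the shift
`k` cancels. As `2 ≤ ℓ - 2 + (j - i).val < n`, negating it gives the representative
`n - ℓ + 2 - (j - i).val`, and the bounds `2 ≤ (j - i).val ≤ n - ℓ` are swapped into themselves by
`d ↦ n - ℓ + 2 - d`. -/

theorem ZMod.val_neg_natCast_of_pos_of_lt {n a : ℕ} [NeZero n] (ha : 0 < a) (han : a < n) :
    (-(a : ZMod n)).val = n - a := by
  rw [ZMod.neg_val', ZMod.val_cast_of_lt han, Nat.mod_eq_of_lt (by omega)]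

theorem ZMod.sub_natCast_sub_eq_neg {n : ℕ} [NeZero n] (i j : ZMod n) (k ℓ : ℕ) (hℓ : 2 ≤ ℓ) :
    (i - (k : ZMod n)) - (j + (ℓ : ZMod n) - (k : ZMod n) - 2)
      = -(((ℓ - 2 + (j - i).val : ℕ)) : ZMod n) := by
  rw [Nat.cast_add, Nat.cast_sub hℓ, ZMod.natCast_zmod_val]
  push_cast
  ring

theorem ZMod.val_sub_natCast_sub {n : ℕ} [NeZero n] (i j : ZMod n) (k ℓ : ℕ) (hℓ : 2 ≤ ℓ)
    (hij1 : 2 ≤ (j - i).val) (hij2 : (j - i).val ≤ n - ℓ) :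
    ((i - (k : ZMod n)) - (j + (ℓ : ZMod n) - (k : ZMod n) - 2)).val
      = n - ℓ + 2 - (j - i).val := by
  rw [ZMod.sub_natCast_sub_eq_neg i j k ℓ hℓ,
    ZMod.val_neg_natCast_of_pos_of_lt (by omega) (by omega)]
  omega

theorem stmt5_general (n ℓ : ℕ) [NeZero n] (hl : 4 ≤ ℓ)
    (i j : ZMod n) (k : ℕ)
    (hij1 : 2 ≤ (j - i).val) (hij2 : (j - i).val ≤ n - ℓ) :
    ((i - (k : ZMod n)) - (j + (ℓ : ZMod n) - (k : ZMod n) - 2)).val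
        = n - ℓ + 2 - (j - i).val
      ∧ 2 ≤ ((i - (k : ZMod n)) - (j + (ℓ : ZMod n) - (k : ZMod n) - 2)).val
      ∧ ((i - (k : ZMod n)) - (j + (ℓ : ZMod n) - (k : ZMod n) - 2)).val ≤ n - ℓ := by
  rw [ZMod.val_sub_natCast_sub i j k ℓ (by omega) hij1 hij2]
  omega

theorem stmt5 (n ℓ : ℕ) [NeZero n] (hn : 8 ≤ n) (hl : 4 ≤ ℓ) (hln : ℓ ≤ n - 4)
    (i j : ZMod n) (k : ℕ)
    (hij1 : 2 ≤ (j - i).val) (hij2 : (j - i).val ≤ n - ℓ)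
    (hk : k ≤ ℓ - 2) :
    ((i - (k : ZMod n)) - (j + (ℓ : ZMod n) - (k : ZMod n) - 2)).val
        = n - ℓ + 2 - (j - i).val
      ∧ 2 ≤ ((i - (k : ZMod n)) - (j + (ℓ : ZMod n) - (k : ZMod n) - 2)).val
      ∧ ((i - (k : ZMod n)) - (j + (ℓ : ZMod n) - (k : ZMod n) - 2)).val ≤ n - ℓ :=
  stmt5_general n ℓ hl i j k hij1 hij2
end

section
/- If two distinct undirected chords e_1 = (v_i, v_j) and e_2 = (v_{i'}, v_{j'}) in E_ℓ satisfy F_{e_1,ℓ} ∩ F_{e_2,ℓ} ≠ ∅, then modulo n either (i' ≡ i + d and j' ≡ j - d) for some d with |d| ≤ ⌊ℓ/2⌋ - 2, d ≠ 0, or i' + j' ≡ i + j. -/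
/-! The two ends of a pair in `F_{e,ℓ}` sum to `i + j + ℓ - 2`, so a pair shared by `F_{e₁,ℓ}` and
`F_{e₂,ℓ}` either is matched in the same orientation, which shifts `i` and `j` by opposite amounts
`d = k - k'`, or in the crossed one, which forces `i + j = i' + j'`. -/

theorem Sym2.eq_and_eq_or_add_eq_of_eq {M : Type*} [AddCommMagma M] {x y x' y' : M}
    (h : s(x, y) = s(x', y')) : (x = x' ∧ y = y') ∨ x + y = x' + y' := by
  rcases Sym2.eq_iff.mp h with ⟨rfl, rfl⟩ | ⟨rfl, rfl⟩
  · exact Or.inl ⟨rfl, rfl⟩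
  · exact Or.inr (add_comm x y)

theorem shift_or_add_eq_of_switchSet_inter_nonempty {n ℓ : ℕ} [NeZero n] {i j i' j' : ZMod n}
    (hint : (switchSet n ℓ (i, j) ∩ switchSet n ℓ (i', j')).Nonempty) :
    (∃ k ∈ Finset.Icc 1 (ℓ / 2 - 1), ∃ k' ∈ Finset.Icc 1 (ℓ / 2 - 1),
        i' = i + ((k : ZMod n) - k') ∧ j' = j - ((k : ZMod n) - k'))
      ∨ i' + j' = i + j := by
  obtain ⟨s, hs⟩ := hint
  obtain ⟨k, hk, hks⟩ := Finset.mem_image.mp (Finset.mem_inter.mp hs).1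
  obtain ⟨k', hk', hk's⟩ := Finset.mem_image.mp (Finset.mem_inter.mp hs).2
  rcases Sym2.eq_and_eq_or_add_eq_of_eq (hks.trans hk's.symm) with ⟨h₁, h₂⟩ | hsum
  · exact Or.inl ⟨k, hk, k', hk', by linear_combination -h₁, by linear_combination -h₂⟩
  · exact Or.inr (by linear_combination -hsum)

theorem stmt8_general (n ℓ : ℕ) [NeZero n]
    (i j i' j' : ZMod n)
    (hne : (i, j) ≠ (i', j'))
    (hint : (switchSet n ℓ (i, j) ∩ switchSet n ℓ (i', j')).Nonempty) :
    (∃ d : ℤ, d ≠ 0 ∧ d.natAbs ≤ ℓ / 2 - 2 ∧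
        i' = i + (d : ZMod n) ∧ j' = j - (d : ZMod n))
      ∨ i' + j' = i + j := by
  refine (shift_or_add_eq_of_switchSet_inter_nonempty hint).imp_left ?_
  rintro ⟨k, hk, k', hk', hi, hj⟩
  rw [Finset.mem_Icc] at hk hk'
  have hkk' : k ≠ k' := by
    rintro rfl
    exact hne (Prod.ext (by simpa using hi.symm) (by simpa using hj.symm))
  exact ⟨k - k', by omega, by omega, by push_cast; exact hi, by push_cast; exact hj⟩

theorem stmt8 (n ℓ : ℕ) [NeZero n] (hn : 8 ≤ n) (hl : 4 ≤ ℓ) (hln : 2 * ℓ ≤ n + 4)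
    (i j i' j' : ZMod n)
    (h1 : (i, j) ∈ chordSet n ℓ) (h2 : (i', j') ∈ chordSet n ℓ)
    (hne : (i, j) ≠ (i', j'))
    (hint : (switchSet n ℓ (i, j) ∩ switchSet n ℓ (i', j')).Nonempty) :
    (∃ d : ℤ, d ≠ 0 ∧ d.natAbs ≤ ℓ / 2 - 2 ∧
        i' = i + (d : ZMod n) ∧ j' = j - (d : ZMod n))
      ∨ i' + j' = i + j :=
  stmt8_general n ℓ i j i' j' hne hint
end

section
/- For e = (v_i, v_j) ∈ E_ℓ with 4 ≤ ℓ ≤ n/2 + 2, the set F_{e,ℓ} is a matching on V: its ⌊ℓ/2⌋ - 1 pairs are pairwise disjoint, i.e., the vertices v_{(i+k) mod n} for 1 ≤ k ≤ ⌊ℓ/2⌋ - 1 and v_{(j+ℓ-k-2) mod n} for 1 ≤ k ≤ ⌊ℓ/2⌋ - 1 are 2(⌊ℓ/2⌋ - 1) distinct vertices. -/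
namespace ZMod

variable {n : ℕ}

theorem natCast_injOn_Iio_s15 : Set.InjOn (Nat.cast : ℕ → ZMod n) (Set.Iio n) :=
  fun _ ha _ hb h => ((natCast_eq_natCast_iff _ _ _).mp h).eq_of_lt_of_lt ha hb

theorem natCast_ne_natCast_of_lt_of_lt_add {s t : ℕ} (hst : s < t) (hts : t < s + n) :
    (s : ZMod n) ≠ t := fun h =>
  hst.ne <| ((natCast_eq_natCast_iff _ _ _).mp h).eq_of_abs_lt (abs_lt.mpr ⟨by omega, by omega⟩)

theorem card_image_Icc_natCast {α : Type*} [DecidableEq α] {f : ZMod n → α}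
    (hf : Function.Injective f) {m : ℕ} (hm : m < n) :
    ((Finset.Icc 1 m).image fun k : ℕ => f k).card = m := by
  rw [Finset.card_image_of_injOn, Nat.card_Icc, Nat.add_sub_cancel]
  refine hf.comp_injOn (natCast_injOn_Iio_s15.mono fun k hk => ?_)
  simp only [Finset.coe_Icc, Set.mem_Icc, Set.mem_Iio] at hk ⊢
  omega

end ZMod

theorem stmt15_general (n ℓ : ℕ) [NeZero n] (hln : 2 * ℓ ≤ n + 4)
    (i j : ZMod n) (he : (i, j) ∈ chordSet n ℓ) :
    ((Finset.Icc 1 (ℓ / 2 - 1)).image (fun k : ℕ => i + (k : ZMod n)) ∪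
        (Finset.Icc 1 (ℓ / 2 - 1)).image
          (fun k : ℕ => j + (ℓ : ZMod n) - (k : ZMod n) - 2)).card
      = 2 * (ℓ / 2 - 1) := by
  simp only [chordSet, Finset.mem_filter, Finset.mem_univ, true_and] at he
  set d := (j - i).val
  have hj : j = i + d := by simp [d]
  have hm : ℓ / 2 - 1 < n := by have := NeZero.pos n; omega
  have hdisj : Disjoint ((Finset.Icc 1 (ℓ / 2 - 1)).image (fun k : ℕ => i + (k : ZMod n)))
      ((Finset.Icc 1 (ℓ / 2 - 1)).image
        (fun k : ℕ => j + (ℓ : ZMod n) - (k : ZMod n) - 2)) := by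
    simp only [Finset.disjoint_left, Finset.mem_image, Finset.mem_Icc]
    rintro _ ⟨a, ha, rfl⟩ ⟨b, hb, hab⟩
    refine ZMod.natCast_ne_natCast_of_lt_of_lt_add (n := n) (s := a + b + 2) (t := d + ℓ)
      (by omega) (by omega) ?_
    rw [hj] at hab
    push_cast
    linear_combination -hab
  have hinj : Function.Injective fun x : ZMod n => j + ℓ - x - 2 := fun x y h => by
    simpa using h
  rw [Finset.card_union_of_disjoint hdisj, ZMod.card_image_Icc_natCast (add_right_injective i) hm,
    ZMod.card_image_Icc_natCast hinj hm]
  omega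

theorem stmt15 (n ℓ : ℕ) [NeZero n] (hn : 8 ≤ n) (hl : 4 ≤ ℓ) (hln : 2 * ℓ ≤ n + 4)
    (i j : ZMod n) (he : (i, j) ∈ chordSet n ℓ) :
    ((Finset.Icc 1 (ℓ / 2 - 1)).image (fun k : ℕ => i + (k : ZMod n)) ∪
        (Finset.Icc 1 (ℓ / 2 - 1)).image
          (fun k : ℕ => j + (ℓ : ZMod n) - (k : ZMod n) - 2)).card
      = 2 * (ℓ / 2 - 1) :=
  stmt15_general n ℓ hln i j he
end

section
/- Let G be a graph containing a Hamilton cycle C_n on vertices v_0, ..., v_{n-1} (edges {v_i, v_{(i+1) mod n}}). Suppose G additionally contains an edge e ∈ E_ℓ and an edge f ∈ F_{e,ℓ} for some 4 ≤ ℓ ≤ n/2. Then {ℓ, n - ℓ + 4} ⊆ 𝓛(G), where 𝓛(G) is the set of lengths of cycles in G. -/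
open SimpleGraph

theorem SimpleGraph.exists_walk_support_eq_of_isChain {V : Type*} {G : SimpleGraph V}
    {l : List V} {u v : V} (hchain : l.IsChain G.Adj) (hhead : l.head? = some u)
    (hlast : l.getLast? = some v) :
    ∃ p : G.Walk u v, p.support = l := by
  have hne : l ≠ [] := by rintro rfl; simp at hhead
  rw [List.head?_eq_some_head hne, Option.some_inj] at hhead
  rw [List.getLast?_eq_some_getLast hne, Option.some_inj] at hlast
  subst hhead hlast
  exact ⟨Walk.ofSupport l hne hchain, Walk.support_ofSupport hne hchain⟩

theorem hasCycleLength_of_chain_of_nodup {V : Type*} {G : SimpleGraph V} {s : Cycle V}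
    (hchain : s.Chain G.Adj) (hnodup : s.Nodup) (hlen : 3 ≤ s.length) :
    HasCycleLength G s.length := by
  induction s using Quotient.inductionOn' with | h l => ?_
  obtain _ | ⟨u, _ | ⟨v, l⟩⟩ := l
  · simp at hlen
  · simp at hlen
  simp only [Cycle.mk''_eq_coe, Cycle.length_coe, List.length_cons] at hlen ⊢
  rw [Cycle.mk''_eq_coe, Cycle.chain_coe_cons, List.cons_append] at hchain
  rw [Cycle.mk''_eq_coe, Cycle.nodup_coe_iff] at hnodup
  obtain ⟨p, hp⟩ : ∃ p : G.Walk v u, p.support = v :: (l ++ [u]) :=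
    exists_walk_support_eq_of_isChain hchain.of_cons rfl
      (by rw [← List.cons_append, List.getLast?_concat])
  have hpath : p.IsPath :=
    Walk.IsPath.mk' <| hp ▸ (List.perm_append_singleton u (v :: l)).nodup_iff.mpr hnodup
  have hplen : p.length = l.length + 1 := by simpa [hp] using p.length_support.symm
  refine ⟨u, .cons hchain.rel p, ?_, by simp [hplen]⟩
  rw [Walk.isCycle_iff_isPath_tail_and_le_length]
  simp only [Walk.tail_cons, Walk.length_cons, hplen]
  exact ⟨by simpa using hpath, by omega⟩

/-- The cycle `x, x+1, …, x+a, x+c, x+c-1, …, x+b` in a graph on `ZMod n` containing the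
Hamilton cycle `t ↦ t + 1`. -/
theorem hasCycleLength_of_two_arcs_s17 {n : ℕ} {G : SimpleGraph (ZMod n)}
    (hC : ∀ t, G.Adj t (t + 1)) (x : ZMod n) {a b c : ℕ}
    (hab : a < b) (hbc : b ≤ c) (hc : c < n) (hlen : 1 ≤ a + (c - b))
    (hac : G.Adj (x + a) (x + c)) (hbx : G.Adj (x + b) x) :
    HasCycleLength G (a + 1 + (c + 1 - b)) := by
  set L := List.range' 0 (a + 1) ++ (List.range' b (c + 1 - b)).reverse with hL
  have hlt : ∀ t ∈ L, t < n := by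
    intro t ht
    simp only [hL, List.mem_append, List.mem_reverse, List.mem_range'_1] at ht
    omega
  have hnodup : L.Nodup := by
    refine List.nodup_append.mpr ⟨List.nodup_range', List.nodup_reverse.mpr List.nodup_range', ?_⟩
    simp only [List.mem_reverse, List.mem_range'_1]
    omega
  set R : ℕ → ℕ → Prop := fun t t' => G.Adj (x + t) (x + t') with hR
  have hstep : ∀ s m, (List.range' s m).IsChain R := fun s m =>
    (List.isChain_range' s m 1).imp fun t t' h => by
      simpa [hR, h, add_assoc] using hC (x + t)
  have hchain : Cycle.Chain R L := by
    rw [hL, List.range'_succ, List.cons_append, Cycle.chain_coe_cons]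
    change List.IsChain R (List.range' 0 (a + 1) ++ (List.range' b (c + 1 - b)).reverse ++ [0])
    rw [List.isChain_append, List.isChain_append]
    refine ⟨⟨hstep _ _, ?_, ?_⟩, List.IsChain.singleton _, ?_⟩
    · rw [List.isChain_reverse]
      exact (hstep _ _).imp fun t t' h => h.symm
    · simpa [hR, List.getLast?_range', show b + (c + 1 - b) - 1 = c by omega] using fun _ => hac
    · simpa [hR, List.head?_range', show c + 1 - b ≠ 0 by omega] using hbx
  have hinj : ∀ t ∈ L, ∀ t' ∈ L, x + (t : ZMod n) = x + t' → t = t' := by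
    intro t ht t' ht' h
    have := (ZMod.natCast_eq_natCast_iff' t t' n).mp (add_left_cancel h)
    rwa [Nat.mod_eq_of_lt (hlt t ht), Nat.mod_eq_of_lt (hlt t' ht')] at this
  have := hasCycleLength_of_chain_of_nodup (s := Cycle.map (fun t : ℕ => x + t) L)
    (by rwa [Cycle.chain_map])
    (by rw [Cycle.map_coe, Cycle.nodup_coe_iff]; exact hnodup.map_on hinj)
    (by simp [hL]; omega)
  simpa [hL] using this

theorem stmt17_general (n ℓ : ℕ) (hln : 2 * ℓ ≤ n)
    (G : SimpleGraph (ZMod n))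
    (hC : ∀ a : ZMod n, G.Adj a (a + 1))
    (i j : ZMod n)
    (hij1 : ℓ ≤ 2 * (j - i).val) (hij2 : 2 * (j - i).val ≤ n)
    (he : G.Adj i j)
    (hf : ∃ k : ℕ, 1 ≤ k ∧ k ≤ ℓ / 2 - 1 ∧
      G.Adj (i + (k : ZMod n)) (j + (ℓ : ZMod n) - (k : ZMod n) - 2)) :
    HasCycleLength G ℓ ∧ HasCycleLength G (n - ℓ + 4) := by
  obtain ⟨k, hk, hkℓ, hf⟩ := hf
  have : NeZero n := ⟨by omega⟩
  set d := (j - i).val with hd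
  have hj : j = i + d := by rw [hd, ZMod.natCast_zmod_val]; ring
  obtain ⟨A, hA⟩ : ∃ A, A + k + 2 = d + ℓ := ⟨d + ℓ - k - 2, by omega⟩
  have hji : G.Adj (i + d) i := hj ▸ he.symm
  have hkA : G.Adj (i + k) (i + A) := by
    have hA' : (A : ZMod n) + k + 2 = d + ℓ := by
      exact_mod_cast congrArg (Nat.cast (R := ZMod n)) hA
    convert hf using 2
    rw [hj]
    linear_combination hA'
  constructor
  · convert hasCycleLength_of_two_arcs_s17 hC i (a := k) (b := d) (c := A)
      (by omega) (by omega) (by omega) (by omega) hkA hji using 1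
    omega
  · have hdn : G.Adj (i + k + (d - k : ℕ)) (i + k + (n - k : ℕ)) := by
      rwa [Nat.cast_sub (by omega), Nat.cast_sub (by omega), add_add_sub_cancel,
        add_add_sub_cancel, ZMod.natCast_self, add_zero]
    have hAk : G.Adj (i + k + (A - k : ℕ)) (i + k) := by
      rw [Nat.cast_sub (by omega), add_add_sub_cancel]
      exact hkA.symm
    convert hasCycleLength_of_two_arcs_s17 hC (i + k) (a := d - k) (b := A - k) (c := n - k)
      (by omega) (by omega) (by omega) (by omega) hdn hAk using 1
    omega

theorem stmt17 (n ℓ : ℕ) [NeZero n] (hn : 8 ≤ n) (hl : 4 ≤ ℓ) (hln : 2 * ℓ ≤ n)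
    (G : SimpleGraph (ZMod n))
    (hC : ∀ a : ZMod n, G.Adj a (a + 1))
    (i j : ZMod n)
    (hij1 : ℓ ≤ 2 * (j - i).val) (hij2 : 2 * (j - i).val ≤ n)
    (he : G.Adj i j)
    (hf : ∃ k : ℕ, 1 ≤ k ∧ k ≤ ℓ / 2 - 1 ∧
      G.Adj (i + (k : ZMod n)) (j + (ℓ : ZMod n) - (k : ZMod n) - 2)) :
    HasCycleLength G ℓ ∧ HasCycleLength G (n - ℓ + 4) :=
  stmt17_general n ℓ hln G hC i j hij1 hij2 he hf
end
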